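/- arXiv:1107.4553 — 3 statements merged into one kernel-verified Lean document; each statement's English description precedes it below -/
import Mathlib

section
/- Let H be a transitive elementary Abelian p-group on a finite set O, and process a list of generators u₁,…,u_m of H as follows: maintain a list 𝐡 (initially empty) and the orbit partition Q of ⟨𝐡⟩ (initially the discrete partition); for a fixed base point a ∈ O, add u_i to 𝐡 (and replace Q by orbp(⟨u_i⟩) ⊔ Q) exactly when a^{u_i} is not in the block of a in Q. Then the resulting list 𝐡 is an F_p-basis of H. -/
/-!
An Abelian transitive group of permutations acts regularly, so a permutation `u ∈ H` is
determined by `a^u`. Hence `a^u` lies in the orbit of `a` under `⟨𝐡⟩` exactly when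
`u ∈ ⟨𝐡⟩`: the procedure discards precisely the redundant generators and keeps the
subgroup generated unchanged, while every kept generator lies outside the subgroup generated
by those kept before it. In a group of exponent `p` such a list is independent: in a relation
`∏ hᵢ^{cᵢ} = 1`, the most recently kept `hᵢ` with `cᵢ ≠ 0` would have `hᵢ^{cᵢ}`, hence `hᵢ`
itself, in the subgroup generated by the generators kept before it.
-/

attribute [local instance] Classical.propDecidable

/-- The greedy basis-building procedure `B`: process the list of generators,
keeping a generator `u` exactly when `a^u` does not lie in the orbit of the
base point `a` under the group generated by the generators kept so far
(that orbit is the block of `a` in the orbit partition `Q`). -/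
noncomputable def buildBasis {O : Type*} (a : O) :
    List (Equiv.Perm O) → List (Equiv.Perm O) → List (Equiv.Perm O)
  | [], h => h
  | u :: l, h =>
    if u a ∈ MulAction.orbit ↥(Subgroup.closure {x | x ∈ h}) a then
      buildBasis a l h
    else
      buildBasis a l (u :: h)

open MulAction Subgroup

section Irredundant

variable {G : Type*} [Group G]

inductive IrredundantGenerators : List G → Prop
  | nil : IrredundantGenerators []
  | cons {g : G} {t : List G} :
      g ∉ closure {x | x ∈ t} → IrredundantGenerators t → IrredundantGenerators (g :: t)

theorem Subgroup.closure_cons_of_mem_closure {g : G} {t : List G}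
    (hg : g ∈ closure {x | x ∈ t}) :
    closure {x | x ∈ g :: t} = closure {x | x ∈ t} := by
  have hset : {x | x ∈ g :: t} = insert g {x | x ∈ t} := by
    ext x; simp
  rw [hset, Set.insert_eq, closure_union]
  exact sup_eq_right.mpr ((closure_le _).mpr (Set.singleton_subset_iff.mpr hg))

theorem Subgroup.mem_of_pow_mem_of_not_dvd {K : Subgroup G} {g : G} {p k : ℕ} (hp : p.Prime)
    (hgp : g ^ p = 1) (hk : ¬ p ∣ k) (hgk : g ^ k ∈ K) : g ∈ K := by
  have hcop : k.Coprime (orderOf g) :=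
    (hp.coprime_iff_not_dvd.mpr hk).symm.coprime_dvd_right (orderOf_dvd_of_pow_eq_one hgp)
  exact (zpowers_le.mpr hgk) (mem_zpowers_pow_iff.mpr hcop)

theorem ofFn_pow_prod_mem_closure (L : List G) (n : Fin L.length → ℕ) :
    (List.ofFn fun i => L.get i ^ n i).prod ∈ closure {x | x ∈ L} :=
  _root_.list_prod_mem fun x hx => by
    obtain ⟨i, rfl⟩ := List.mem_ofFn.mp hx
    exact pow_mem (Subgroup.subset_closure (show L.get i ∈ {x | x ∈ L} from L.get_mem i)) _

theorem IrredundantGenerators.eq_zero_of_prod_pow_eq_one {p : ℕ} (hp : p.Prime) {L : List G}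
    (hL : IrredundantGenerators L) (hpow : ∀ g ∈ L, g ^ p = 1) :
    ∀ c : Fin L.length → ZMod p,
      (List.ofFn fun i => L.get i ^ (c i).val).prod = 1 → ∀ i, c i = 0 := by
  have : NeZero p := ⟨hp.ne_zero⟩
  induction hL with
  | nil => exact fun _ _ i => i.elim0
  | @cons g t hg _ ih =>
    intro c hprod
    rw [List.ofFn_succ, List.prod_cons] at hprod
    set s := (List.ofFn fun i : Fin t.length => t.get i ^ (c i.succ).val).prod
    change g ^ (c 0).val * s = 1 at hprod
    have hc0 : c 0 = 0 := by
      by_contra hc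
      have hgc : g ^ (c 0).val ∈ closure {x | x ∈ t} := by
        rw [eq_inv_of_mul_eq_one_left hprod]
        exact inv_mem (ofFn_pow_prod_mem_closure t _)
      have hndvd : ¬ p ∣ (c 0).val := fun hdvd =>
        hc ((ZMod.val_eq_zero _).mp (Nat.eq_zero_of_dvd_of_lt hdvd (ZMod.val_lt _)))
      exact hg (mem_of_pow_mem_of_not_dvd hp (hpow g List.mem_cons_self) hndvd hgc)
    have hs : s = 1 := by
      simpa only [hc0, ZMod.val_zero, pow_zero, one_mul] using hprod
    exact Fin.cases hc0 (ih (fun x hx => hpow x (List.mem_cons_of_mem _ hx)) _ hs)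

end Irredundant

section Regular

variable {O : Type*} {H : Subgroup (Equiv.Perm O)}

theorem eq_one_of_apply_eq_self_of_commute (hcomm : ∀ u ∈ H, ∀ v ∈ H, u * v = v * u)
    [htrans : IsPretransitive H O] {a : O} {s : Equiv.Perm O} (hs : s ∈ H) (hsa : s a = a) :
    s = 1 := by
  ext b
  obtain ⟨t, rfl⟩ := htrans.exists_smul_eq a b
  change (s * t) a = (t : Equiv.Perm O) a
  rw [hcomm s hs t t.2, Equiv.Perm.mul_apply, hsa]

theorem eq_of_apply_eq_of_commute (hcomm : ∀ u ∈ H, ∀ v ∈ H, u * v = v * u)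
    [IsPretransitive H O] {a : O} {u v : Equiv.Perm O} (hu : u ∈ H) (hv : v ∈ H)
    (huv : u a = v a) : u = v := by
  refine (inv_mul_eq_one.mp (eq_one_of_apply_eq_self_of_commute (a := a) hcomm
    (mul_mem (inv_mem hv) hu) ?_)).symm
  rw [Equiv.Perm.mul_apply, huv]
  exact v.symm_apply_apply a

end Regular

section BuildBasis

variable {O : Type*} {a : O} {u : Equiv.Perm O} {rem h : List (Equiv.Perm O)}

theorem buildBasis_cons_of_mem (hu : u a ∈ orbit (closure {x | x ∈ h}) a) :
    buildBasis a (u :: rem) h = buildBasis a rem h := by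
  rw [buildBasis, if_pos hu]

theorem buildBasis_cons_of_not_mem (hu : u a ∉ orbit (closure {x | x ∈ h}) a) :
    buildBasis a (u :: rem) h = buildBasis a rem (u :: h) := by
  rw [buildBasis, if_neg hu]

theorem IrredundantGenerators.buildBasis (hh : IrredundantGenerators h) :
    IrredundantGenerators (buildBasis a rem h) := by
  induction rem generalizing h with
  | nil => exact hh
  | cons u rem ih =>
    by_cases hu : u a ∈ orbit (closure {x | x ∈ h}) a
    · rw [buildBasis_cons_of_mem hu]
      exact ih hh
    · rw [buildBasis_cons_of_not_mem hu]
      exact ih (.cons (fun hmem => hu ⟨⟨u, hmem⟩, rfl⟩) hh)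

theorem mem_of_mem_buildBasis {x : Equiv.Perm O} (hx : x ∈ buildBasis a rem h) :
    x ∈ rem ++ h := by
  induction rem generalizing h with
  | nil => exact hx
  | cons u rem ih =>
    by_cases hu : u a ∈ orbit (closure {x | x ∈ h}) a
    · rw [buildBasis_cons_of_mem hu] at hx
      exact List.mem_cons_of_mem _ (ih hx)
    · rw [buildBasis_cons_of_not_mem hu] at hx
      exact List.perm_middle.mem_iff.mp (ih hx)

theorem closure_buildBasis {H : Subgroup (Equiv.Perm O)}
    (hfree : ∀ u ∈ H, ∀ v ∈ H, u a = v a → u = v) (hsub : ∀ x ∈ rem ++ h, x ∈ H) :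
    closure {x | x ∈ buildBasis a rem h} = closure {x | x ∈ rem ++ h} := by
  induction rem generalizing h with
  | nil => rfl
  | cons u rem ih =>
    by_cases hu : u a ∈ orbit (closure {x | x ∈ h}) a
    · obtain ⟨k, hk⟩ := hu
      have hkH : (k : Equiv.Perm O) ∈ H :=
        (closure_le H).mpr (fun x hx => hsub x (List.mem_append_right _ hx)) k.2
      have hku : (k : Equiv.Perm O) = u := hfree _ hkH _ (hsub u List.mem_cons_self) hk
      have humem : u ∈ closure {x | x ∈ rem ++ h} :=
        closure_mono (fun x hx => List.mem_append_right _ hx) (hku ▸ k.2)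
      rw [buildBasis_cons_of_mem ⟨k, hk⟩, ih (fun x hx => hsub x (List.mem_cons_of_mem _ hx)),
        List.cons_append, closure_cons_of_mem_closure humem]
    · have hperm : (rem ++ u :: h).Perm (u :: rem ++ h) := List.perm_middle
      rw [buildBasis_cons_of_not_mem hu, ih (fun x hx => hsub x (hperm.mem_iff.mp hx))]
      congr 1
      ext x
      exact hperm.mem_iff

end BuildBasis

theorem buildBasis_is_basis_general (p : ℕ) (hp : p.Prime) (O : Type*)
    (l : List (Equiv.Perm O))
    (hcomm : ∀ u ∈ Subgroup.closure {x | x ∈ l}, ∀ v ∈ Subgroup.closure {x | x ∈ l},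
      u * v = v * u)
    (horder : ∀ u ∈ Subgroup.closure {x | x ∈ l}, u ≠ 1 → orderOf u = p)
    (htrans : MulAction.IsPretransitive ↥(Subgroup.closure {x | x ∈ l}) O)
    (a : O) :
    Subgroup.closure {x | x ∈ buildBasis a l []} = Subgroup.closure {x | x ∈ l} ∧
    ∀ c : Fin (buildBasis a l []).length → ZMod p,
      (List.ofFn fun i => ((buildBasis a l []).get i) ^ (c i).val).prod = 1 → ∀ i, c i = 0 := by
  have hsub : ∀ x ∈ l ++ [], x ∈ closure {x | x ∈ l} := fun x hx =>
    subset_closure (List.append_nil l ▸ hx)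
  have hfree : ∀ u ∈ closure {x | x ∈ l}, ∀ v ∈ closure {x | x ∈ l}, u a = v a → u = v :=
    fun _ hu _ hv => eq_of_apply_eq_of_commute hcomm hu hv
  refine ⟨(closure_buildBasis hfree hsub).trans (by rw [List.append_nil]), ?_⟩
  refine IrredundantGenerators.nil.buildBasis.eq_zero_of_prod_pow_eq_one hp fun g hg => ?_
  have hgH := hsub g (mem_of_mem_buildBasis hg)
  obtain rfl | hg1 := eq_or_ne g 1
  · exact one_pow p
  · exact horder g hgH hg1 ▸ pow_orderOf_eq_one g

/-- If `H = ⟨u₁,…,u_m⟩` is a transitive elementary Abelian `p`-group on a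
finite set `O` and `a ∈ O`, then the list produced by the greedy procedure
(started with the empty list, i.e. the discrete orbit partition) is an
`F_p`-basis of `H`: it generates `H` and is linearly independent over `F_p`
(no nontrivial product `∏ hᵢ^{cᵢ}` with `cᵢ ∈ F_p` is the identity). -/
theorem buildBasis_is_basis (p : ℕ) (hp : p.Prime) (O : Type*) [Fintype O]
    (l : List (Equiv.Perm O))
    (hcomm : ∀ u ∈ Subgroup.closure {x | x ∈ l}, ∀ v ∈ Subgroup.closure {x | x ∈ l},
      u * v = v * u)
    (horder : ∀ u ∈ Subgroup.closure {x | x ∈ l}, u ≠ 1 → orderOf u = p)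
    (htrans : MulAction.IsPretransitive ↥(Subgroup.closure {x | x ∈ l}) O)
    (a : O) :
    Subgroup.closure {x | x ∈ buildBasis a l []} = Subgroup.closure {x | x ∈ l} ∧
    ∀ c : Fin (buildBasis a l []).length → ZMod p,
      (List.ofFn fun i => ((buildBasis a l []).get i) ^ (c i).val).prod = 1 → ∀ i, c i = 0 :=
  buildBasis_is_basis_general p hp O l hcomm horder htrans a
end

section
/- Let Σ be a finite set, p a prime, and S a finite set of subsets (clauses) of Σ. Define A_S as the disjoint union over C ∈ S of the function sets F_p^C, and the group morphism f: F_p^Σ → Sym(A_S) by w^{f(u)} = w + u|_C for w ∈ F_p^C. Let G_S = ⟨ f(δ_α) : α ∈ Σ ⟩, where δ_α is the indicator function of α, and define the constraint C_S(w) = { w + δ_α|_C : α ∈ C } for w ∈ F_p^C. Then there exists an interpretation I ⊆ Σ with |C ∩ I| = 1 for every C ∈ S if and only if some g ∈ G_S satisfies w^g ∈ C_S(w) for all w ∈ A_S. -/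
variable {Sig : Type*} [DecidableEq Sig]

/-- The set `A_S`: the disjoint union over clauses `C ∈ S` of the function
spaces `F_p^C`. -/
def ClauseSpace (p : ℕ) (S : Finset (Finset Sig)) : Type _ :=
  Σ C : {C // C ∈ S}, ({x // x ∈ C.1} → ZMod p)

/-- The morphism `f : F_p^Σ → Sym(A_S)`, `w^{f(u)} = w + u|_C` on each fiber. -/
def clausePerm (p : ℕ) (S : Finset (Finset Sig)) (u : Sig → ZMod p) :
    Equiv.Perm (ClauseSpace p S) :=
  Equiv.sigmaCongrRight fun C => Equiv.addRight fun x : {x // x ∈ C.1} => u x.1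

/-- The indicator function `δ_α` of a variable `α`. -/
def indicator (p : ℕ) (α : Sig) : Sig → ZMod p := fun β => if β = α then 1 else 0

/-! Since `f` is a homomorphism, `G_S` lies in its image, so a constrained `g` is `f(u)` for
some `u`; the constraint at `w ∈ F_p^C` says exactly that `u|_C = δ_α|_C` for some `α ∈ C`.
Hence the support of `u` meets every clause in one variable, and conversely for a 1-satisfying
`I` the element `f(∑_{α ∈ I} δ_α) ∈ G_S` satisfies the constraint. -/

theorem Finset.card_inter_eq_one_iff {C I : Finset Sig} :
    (C ∩ I).card = 1 ↔ ∃ α ∈ C, ∀ x ∈ C, (x ∈ I ↔ x = α) := by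
  rw [Finset.card_eq_one]
  refine exists_congr fun α => ⟨fun h => ?_, fun ⟨hαC, h⟩ => ?_⟩
  · have hα := Finset.ext_iff.1 h
    simp only [Finset.mem_inter, Finset.mem_singleton] at hα
    exact ⟨((hα α).2 rfl).1, fun x hx => by simpa [hx] using hα x⟩
  · ext x
    simp only [Finset.mem_inter, Finset.mem_singleton]
    exact ⟨fun ⟨hx, hxI⟩ => (h x hx).1 hxI, fun hx => hx ▸ ⟨hαC, (h α hαC).2 rfl⟩⟩

section clausePerm

omit [DecidableEq Sig]

variable (p : ℕ) (S : Finset (Finset Sig))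

theorem clausePerm_apply (u : Sig → ZMod p) (a : ClauseSpace p S) :
    clausePerm p S u a = ⟨a.1, a.2 + fun x => u x.1⟩ := rfl

theorem clausePerm_apply_eq_iff (u v : Sig → ZMod p) (a : ClauseSpace p S) :
    clausePerm p S u a = ⟨a.1, a.2 + fun x => v x.1⟩ ↔ ∀ x ∈ a.1.1, u x = v x := by
  rw [clausePerm_apply]
  refine Sigma.mk.inj_iff.trans ?_
  simp [funext_iff]

theorem clausePerm_zero : clausePerm p S 0 = 1 :=
  Equiv.ext fun a => Sigma.ext rfl <| heq_of_eq <| add_zero a.2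

theorem clausePerm_add (u v : Sig → ZMod p) :
    clausePerm p S (u + v) = clausePerm p S u * clausePerm p S v :=
  Equiv.ext fun a => Sigma.ext rfl <| heq_of_eq <| funext fun x =>
    show a.2 x + (u x + v x) = a.2 x + v x + u x by abel

def clausePermHom : Multiplicative (Sig → ZMod p) →* Equiv.Perm (ClauseSpace p S) :=
  MonoidHom.mk' (fun u => clausePerm p S u.toAdd) (fun u v => clausePerm_add p S u.toAdd v.toAdd)

end clausePerm

section closure

variable (p : ℕ) (S : Finset (Finset Sig))

theorem clausePerm_sum_indicator_mem_closure (I : Finset Sig) :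
    clausePerm p S (∑ α ∈ I, indicator p α) ∈
      Subgroup.closure (Set.range fun α : Sig => clausePerm p S (indicator p α)) := by
  induction I using Finset.induction_on with
  | empty => simp [clausePerm_zero]
  | insert α I hα ih =>
    rw [Finset.sum_insert hα, clausePerm_add]
    exact Subgroup.mul_mem _ (Subgroup.subset_closure ⟨α, rfl⟩) ih

theorem exists_eq_clausePerm_of_mem_closure {g : Equiv.Perm (ClauseSpace p S)}
    (hg : g ∈ Subgroup.closure (Set.range fun α : Sig => clausePerm p S (indicator p α))) :
    ∃ u, g = clausePerm p S u := by
  have hle : Subgroup.closure (Set.range fun α : Sig => clausePerm p S (indicator p α)) ≤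
      (clausePermHom p S).range :=
    Subgroup.closure_le _ |>.2 <| Set.range_subset_iff.2 fun α =>
      ⟨Multiplicative.ofAdd (indicator p α), rfl⟩
  obtain ⟨u, rfl⟩ := hle hg
  exact ⟨u.toAdd, rfl⟩

end closure

theorem one_sat_iff_constraint_general (p : ℕ) (hp : p.Prime)
    (S : Finset (Finset Sig)) :
    (∃ I : Finset Sig, ∀ C ∈ S, (C ∩ I).card = 1) ↔
    (∃ g ∈ Subgroup.closure (Set.range fun α : Sig => clausePerm p S (indicator p α)),
      ∀ a : ClauseSpace p S,
        ∃ α ∈ a.1.1, g a = ⟨a.1, a.2 + fun x => indicator p α x.1⟩) := by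
  have hone : (1 : ZMod p) ≠ 0 := by
    have := Fact.mk hp
    exact one_ne_zero
  constructor
  · rintro ⟨I, hI⟩
    refine ⟨_, clausePerm_sum_indicator_mem_closure p S I, fun a => ?_⟩
    obtain ⟨α, hαC, hI⟩ := Finset.card_inter_eq_one_iff.1 (hI a.1.1 a.1.2)
    refine ⟨α, hαC, (clausePerm_apply_eq_iff p S _ _ a).2 fun x hx => ?_⟩
    simp [indicator, hI x hx]
  · rintro ⟨g, hg, hsat⟩
    obtain ⟨u, rfl⟩ := exists_eq_clausePerm_of_mem_closure p S hg
    refine ⟨(S.sup id).filter (u · ≠ 0), fun C hC => Finset.card_inter_eq_one_iff.2 ?_⟩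
    obtain ⟨α, hαC, hu⟩ := hsat ⟨⟨C, hC⟩, 0⟩
    refine ⟨α, hαC, fun x hx => ?_⟩
    replace hu := (clausePerm_apply_eq_iff p S _ _ _).1 hu
    have hxS : x ∈ S.sup id := Finset.le_sup (f := id) hC hx
    rw [Finset.mem_filter, hu x hx, indicator]
    simp [hxS, hone]

/-- `S` is 1-satisfiable (some `I ⊆ Σ` meets every clause in exactly one
element) iff some `g` in the group `G_S = ⟨f(δ_α) : α ∈ Σ⟩` satisfies the
constraint `w^g ∈ C_S(w) = { w + δ_α|_C : α ∈ C }` for all `w ∈ A_S`. -/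
theorem one_sat_iff_constraint (p : ℕ) (hp : p.Prime) [Fintype Sig]
    (S : Finset (Finset Sig)) :
    (∃ I : Finset Sig, ∀ C ∈ S, (C ∩ I).card = 1) ↔
    (∃ g ∈ Subgroup.closure (Set.range fun α : Sig => clausePerm p S (indicator p α)),
      ∀ a : ClauseSpace p S,
        ∃ α ∈ a.1.1, g a = ⟨a.1, a.2 + fun x => indicator p α x.1⟩) :=
  one_sat_iff_constraint_general p hp S
end

section
/- Let Σ be a finite set, p a prime, S a finite set of subsets of Σ each of cardinality at most p. Define A'_S = (Σ × F_p) ⊎ (S × F_p) and the homomorphism f': F_p^Σ → Sym(A'_S) by ⟨α, x⟩^{f'(u)} = ⟨α, x + u(α)⟩ and ⟨C, y⟩^{f'(u)} = ⟨C, y + Σ_{β∈C} u(β)⟩. Let G'_S = ⟨ f'(δ_α) : α ∈ Σ ⟩ and define the constraint C'_S by C'_S(⟨α,x⟩) = {⟨α,x⟩, ⟨α,x+1⟩} and C'_S(⟨C,y⟩) = {⟨C,y+1⟩}. Then S is 1-satisfiable if and only if some g ∈ G'_S satisfies a^g ∈ C'_S(a) for all a ∈ A'_S. -/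
variable {Sig : Type*} [DecidableEq Sig]

/-- The set `A'_S = (Σ × F_p) ⊎ (S × F_p)`. -/
def VarClauseSpace (p : ℕ) (S : Finset (Finset Sig)) : Type _ :=
  (Sig × ZMod p) ⊕ ({C // C ∈ S} × ZMod p)

/-- The map `f' : F_p^Σ → Sym(A'_S)`:
`⟨α,x⟩ ↦ ⟨α, x + u(α)⟩` and `⟨C,y⟩ ↦ ⟨C, y + Σ_{β∈C} u(β)⟩`. -/
def varClausePerm (p : ℕ) (S : Finset (Finset Sig)) (u : Sig → ZMod p) :
    Equiv.Perm (VarClauseSpace p S) :=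
  Equiv.sumCongr
    (Equiv.prodCongrRight fun α => Equiv.addRight (u α))
    (Equiv.prodCongrRight fun C : {C // C ∈ S} => Equiv.addRight (∑ β ∈ C.1, u β))

/-- The constraint `C'_S`: `C'_S⟨α,x⟩ = {⟨α,x⟩, ⟨α,x+1⟩}` and
`C'_S⟨C,y⟩ = {⟨C,y+1⟩}`. -/
def varClauseConstraint (p : ℕ) (S : Finset (Finset Sig)) :
    VarClauseSpace p S → Set (VarClauseSpace p S)
  | Sum.inl (α, x) => {Sum.inl (α, x), Sum.inl (α, x + 1)}
  | Sum.inr (C, y) => {Sum.inr (C, y + 1)}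

/-! A clause permutation `f'(u)` shifts the `C`-block by `∑_{β ∈ C} u β`, so `f'(u)` meets the
constraint exactly when `u` is `0/1`-valued and sums to `1` on every clause, i.e. `u` is the
indicator of a set `I` with `|C ∩ I| ≡ 1 (mod p)` for every `C ∈ S`. Since `|C ∩ I| ≤ |C| ≤ p`
and `p ≠ 1`, this congruence forces `|C ∩ I| = 1`. Conversely every element of `G'_S` is some
`f'(u)`, and `f'(1_I) = ∏_{α ∈ I} f'(δ_α)` lies in `G'_S`. -/

open Finset

theorem ZMod.natCast_eq_one_iff_of_le {p n : ℕ} (hp : p ≠ 1) (hn : n ≤ p) :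
    (n : ZMod p) = 1 ↔ n = 1 := by
  refine ⟨fun h => ?_, fun h => by rw [h, Nat.cast_one]⟩
  rcases hn.lt_or_eq with hlt | rfl
  · have : Fact (1 < p) := ⟨by omega⟩
    simpa [ZMod.val_cast_of_lt hlt, ZMod.val_one] using congrArg ZMod.val h
  · rw [ZMod.natCast_self] at h
    have := ZMod.nontrivial_iff.2 hp
    exact absurd h zero_ne_one

theorem Finset.mem_biUnion_filter_of_mem {V : Type*} [DecidableEq V] {S : Finset (Finset V)}
    {C : Finset V} {β : V} (hC : C ∈ S) (hβ : β ∈ C) (q : V → Prop) [DecidablePred q] :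
    β ∈ S.biUnion (fun D => D.filter q) ↔ q β := by
  simp only [mem_biUnion, mem_filter]
  exact ⟨fun ⟨_, _, _, hq⟩ => hq, fun hq => ⟨C, hC, hβ, hq⟩⟩

section VarClause

variable {V : Type*} {p : ℕ} (S : Finset (Finset V))

@[simp]
theorem varClausePerm_inl (u : V → ZMod p) (α : V) (x : ZMod p) :
    varClausePerm p S u (.inl (α, x)) = .inl (α, x + u α) :=
  rfl

@[simp]
theorem varClausePerm_inr (u : V → ZMod p) (C : {C // C ∈ S}) (y : ZMod p) :
    varClausePerm p S u (.inr (C, y)) = .inr (C, y + ∑ β ∈ C.1, u β) :=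
  rfl

theorem varClausePerm_zero : varClausePerm p S 0 = 1 := by
  refine Equiv.ext fun a => ?_
  -- `simp` cannot close equations typed by the non-reducible `VarClauseSpace`
  change @Eq ((V × ZMod p) ⊕ ({C // C ∈ S} × ZMod p)) (varClausePerm p S 0 a) a
  rcases a with ⟨α, x⟩ | ⟨C, y⟩ <;> simp

theorem varClausePerm_add (u v : V → ZMod p) :
    varClausePerm p S (u + v) = varClausePerm p S u * varClausePerm p S v := by
  refine Equiv.ext fun a => ?_
  change @Eq ((V × ZMod p) ⊕ ({C // C ∈ S} × ZMod p))
    (varClausePerm p S (u + v) a) (varClausePerm p S u (varClausePerm p S v a))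
  rcases a with ⟨α, x⟩ | ⟨C, y⟩ <;> simp [sum_add_distrib, add_assoc, add_comm (u _)]

def varClauseHom : Multiplicative (V → ZMod p) →* Equiv.Perm (VarClauseSpace p S) where
  toFun u := varClausePerm p S u.toAdd
  map_one' := varClausePerm_zero S
  map_mul' u v := varClausePerm_add S u.toAdd v.toAdd

theorem exists_varClausePerm_eq_of_mem_closure [DecidableEq V]
    {g : Equiv.Perm (VarClauseSpace p S)}
    (hg : g ∈ Subgroup.closure (Set.range fun α : V => varClausePerm p S (indicator p α))) :
    ∃ u, varClausePerm p S u = g := by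
  have hle : Subgroup.closure (Set.range fun α : V => varClausePerm p S (indicator p α)) ≤
      (varClauseHom S).range :=
    (Subgroup.closure_le _).2 <| Set.range_subset_iff.2 fun α => ⟨.ofAdd (indicator p α), rfl⟩
  obtain ⟨u, rfl⟩ := hle hg
  exact ⟨u.toAdd, rfl⟩

theorem varClausePerm_ite_mem_closure [DecidableEq V] (I : Finset V) :
    varClausePerm p S (fun β => if β ∈ I then 1 else 0) ∈
      Subgroup.closure (Set.range fun α : V => varClausePerm p S (indicator p α)) := by
  have hsum : (fun β => if β ∈ I then (1 : ZMod p) else 0) = ∑ α ∈ I, indicator p α := by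
    funext β
    simp [Finset.sum_apply, indicator]
  rw [hsum]
  change varClauseHom S (.ofAdd (∑ α ∈ I, indicator p α)) ∈ _
  rw [← Subgroup.mem_comap, ofAdd_sum]
  exact Subgroup.prod_mem _ fun α _ => Subgroup.subset_closure ⟨α, rfl⟩

theorem varClausePerm_inl_mem_varClauseConstraint_iff (u : V → ZMod p) (α : V) (x : ZMod p) :
    varClausePerm p S u (.inl (α, x)) ∈ varClauseConstraint p S (.inl (α, x)) ↔
      u α = 0 ∨ u α = 1 := by
  change Sum.inl (α, x + u α) ∈ ({.inl (α, x), .inl (α, x + 1)} : Set ((V × ZMod p) ⊕ _)) ↔ _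
  simp

theorem varClausePerm_inr_mem_varClauseConstraint_iff (u : V → ZMod p) (C : {C // C ∈ S})
    (y : ZMod p) :
    varClausePerm p S u (.inr (C, y)) ∈ varClauseConstraint p S (.inr (C, y)) ↔
      ∑ β ∈ C.1, u β = 1 := by
  change Sum.inr (C, y + ∑ β ∈ C.1, u β) ∈ ({.inr (C, y + 1)} : Set ((V × ZMod p) ⊕ _)) ↔ _
  simp

theorem forall_varClausePerm_mem_varClauseConstraint_iff (u : V → ZMod p) :
    (∀ a, varClausePerm p S u a ∈ varClauseConstraint p S a) ↔
      (∀ α, u α = 0 ∨ u α = 1) ∧ ∀ C ∈ S, ∑ β ∈ C, u β = 1 := by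
  change (∀ a : (V × ZMod p) ⊕ ({C // C ∈ S} × ZMod p), _) ↔ _
  simp only [Sum.forall, Prod.forall, Subtype.forall, forall_const,
    varClausePerm_inl_mem_varClauseConstraint_iff, varClausePerm_inr_mem_varClauseConstraint_iff]

theorem card_inter_eq_one_iff_sum_ite_eq_one [DecidableEq V] (hp : p ≠ 1) {C : Finset V}
    (hC : #C ≤ p) (I : Finset V) :
    #(C ∩ I) = 1 ↔ ∑ β ∈ C, (if β ∈ I then (1 : ZMod p) else 0) = 1 := by
  rw [sum_boole, filter_mem_eq_inter,
    ZMod.natCast_eq_one_iff_of_le hp ((card_le_card inter_subset_left).trans hC)]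

end VarClause

theorem one_sat_iff_two_constraint_general (p : ℕ) (hp : p.Prime)
    (S : Finset (Finset Sig)) (hcard : ∀ C ∈ S, C.card ≤ p) :
    (∃ I : Finset Sig, ∀ C ∈ S, (C ∩ I).card = 1) ↔
    (∃ g ∈ Subgroup.closure
        (Set.range fun α : Sig => varClausePerm p S (indicator p α)),
      ∀ a : VarClauseSpace p S, g a ∈ varClauseConstraint p S a) := by
  have hp1 : p ≠ 1 := hp.one_lt.ne'
  constructor
  · rintro ⟨I, hI⟩
    refine ⟨_, varClausePerm_ite_mem_closure S I,
      (forall_varClausePerm_mem_varClauseConstraint_iff S _).2 ⟨fun α => ?_, fun C hC => ?_⟩⟩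
    · by_cases hα : α ∈ I <;> simp [hα]
    · exact (card_inter_eq_one_iff_sum_ite_eq_one hp1 (hcard C hC) I).1 (hI C hC)
  · rintro ⟨g, hg, hconstr⟩
    obtain ⟨u, rfl⟩ := exists_varClausePerm_eq_of_mem_closure S hg
    obtain ⟨h01, hsum⟩ := (forall_varClausePerm_mem_varClauseConstraint_iff S _).1 hconstr
    let I := S.biUnion fun C => C.filter (u · = 1)
    refine ⟨I, fun C hC => (card_inter_eq_one_iff_sum_ite_eq_one hp1 (hcard C hC) I).2 ?_⟩
    refine (sum_congr rfl fun β hβ => ?_).trans (hsum C hC)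
    have hI : β ∈ I ↔ u β = 1 := mem_biUnion_filter_of_mem hC hβ _
    by_cases hβI : β ∈ I
    · rw [if_pos hβI, hI.1 hβI]
    · rw [if_neg hβI, ((h01 β).resolve_right (mt hI.2 hβI))]

/-- Let `S` be a finite set of clauses over `Σ`, each of cardinality at most
`p`. Then `S` is 1-satisfiable iff some `g` in `G'_S = ⟨f'(δ_α) : α ∈ Σ⟩`
satisfies `a^g ∈ C'_S(a)` for all `a ∈ A'_S`. -/
theorem one_sat_iff_two_constraint (p : ℕ) (hp : p.Prime) [Fintype Sig]
    (S : Finset (Finset Sig)) (hcard : ∀ C ∈ S, C.card ≤ p) :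
    (∃ I : Finset Sig, ∀ C ∈ S, (C ∩ I).card = 1) ↔
    (∃ g ∈ Subgroup.closure
        (Set.range fun α : Sig => varClausePerm p S (indicator p α)),
      ∀ a : VarClauseSpace p S, g a ∈ varClauseConstraint p S a) :=
  one_sat_iff_two_constraint_general p hp S hcard
end
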